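/- Let U, V ∈ SO(3), S = diag(s₁,s₂,s₃), F = USVᵀ, and M = UVᵀ. For i ∈ {1,2,3} and θ ∈ ℝ, define R(θ) = exp(θ·(Ue_i)∧)·M. Then exp(θ·(Ue_i)∧)·M = M·exp(θ·(Ve_i)∧), and tr(FᵀR(θ)) = s_i + (s_j + s_k)·cos θ, where {i,j,k} = {1,2,3}. Consequently the matrix Fisher density satisfies p(R(θ); F) = (e^{s_i}/c(S))·exp((s_j + s_k)·cos θ). -/

import Mathlib

open Matrix MeasureTheory Real

noncomputable section

abbrev Mat3 := Matrix (Fin 3) (Fin 3) ℝ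

instance : MeasurableSpace Mat3 :=
  show MeasurableSpace (Fin 3 → Fin 3 → ℝ) from inferInstance

/-- `SO(3)`: real 3×3 matrices with `RᵀR = I` and `det R = 1`. -/
def SO3 : Set Mat3 := {R | Rᵀ * R = 1 ∧ R.det = 1}

/-- The hat map `∧ : ℝ³ → ℝ^{3×3}`, `(hat v) w = v × w`. -/
def hat (v : Fin 3 → ℝ) : Mat3 :=
  !![0, -v 2, v 1; v 2, 0, -v 0; -v 1, v 0, 0]

/-- The vee map `∨`, inverse of the hat map on skew-symmetric matrices. -/
def vee (A : Mat3) : Fin 3 → ℝ := ![A 2 1, A 0 2, A 1 0]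

/-- `ν` is the bi-invariant Haar probability measure on `SO(3)`. -/
def IsHaarSO3 (ν : Measure Mat3) : Prop :=
  IsProbabilityMeasure ν ∧ ν SO3ᶜ = 0 ∧
    (∀ A ∈ SO3, Measure.map (fun R => A * R) ν = ν) ∧
    (∀ A ∈ SO3, Measure.map (fun R => R * A) ν = ν)

/-- The normalizing constant `c(F) = ∫_{SO(3)} etr(FᵀQ) dQ`. -/
def cF (ν : Measure Mat3) (F : Mat3) : ℝ := ∫ Q, Real.exp ((Fᵀ * Q).trace) ∂ν

/-- The tangent-space deviation `ν_R = (QS − SQᵀ)∨`, `Q = UᵀRV`. -/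
def nuR (U S V R : Mat3) : Fin 3 → ℝ :=
  vee ((Uᵀ * R * V) * S - S * (Uᵀ * R * V)ᵀ)

/-- `Σ_c = Σ − P(tr(S)I − S)Pᵀ`. -/
def sigmaC {n : ℕ} (Sig : Matrix (Fin n) (Fin n) ℝ) (P : Matrix (Fin n) (Fin 3) ℝ)
    (S : Mat3) : Matrix (Fin n) (Fin n) ℝ :=
  Sig - P * (S.trace • (1 : Mat3) - S) * Pᵀ

/-- The matrix Fisher–Gaussian density with parameters `(μ, Σ, P, U, S, V)`. -/
def mfg {n : ℕ} (ν : Measure Mat3) (μ : Fin n → ℝ) (Sig : Matrix (Fin n) (Fin n) ℝ)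
    (P : Matrix (Fin n) (Fin 3) ℝ) (U S V : Mat3) (R : Mat3) (x : Fin n → ℝ) : ℝ :=
  (cF ν (U * S * Vᵀ) * Real.sqrt ((2 * Real.pi) ^ n * (sigmaC Sig P S).det))⁻¹ *
    Real.exp (-(1/2) * ((x - (μ + P.mulVec (nuR U S V R))) ⬝ᵥ
      ((sigmaC Sig P S)⁻¹ *ᵥ (x - (μ + P.mulVec (nuR U S V R)))))) *
    Real.exp ((U * S * Vᵀ * Rᵀ).trace)

/-! Conjugating by `U ∈ SO(3)` turns `exp(θ (U eᵢ)∧)` into `U exp(θ eᵢ∧) Uᵀ`, so both sides of the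
first identity equal `U exp(θ eᵢ∧) Vᵀ`, and `tr(Fᵀ R(θ)) = tr(S exp(θ eᵢ∧))`. Since `(eᵢ∧)³ = -eᵢ∧`,
Rodrigues' formula `exp(θA) = 1 + sin θ A + (1 - cos θ) A²` evaluates this trace to
`sᵢ + (sⱼ + sₖ) cos θ`. Finally `c(USVᵀ) = c(S)` by bi-invariance of the Haar measure. -/

section Rodrigues

variable {𝔸 : Type*} [NormedRing 𝔸] [NormedAlgebra ℝ 𝔸] {A : 𝔸}

theorem pow_odd_of_mul_mul_self_eq_neg (hA : A * A * A = -A) (n : ℕ) :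
    A ^ (2 * n + 1) = (-1 : ℝ) ^ n • A := by
  induction n with
  | zero => simp
  | succ n ih =>
    rw [show 2 * (n + 1) + 1 = 2 * n + 1 + 2 by ring, pow_add, ih, sq, smul_mul_assoc,
      ← mul_assoc, hA, pow_succ, mul_neg_one, neg_smul, smul_neg]

theorem pow_even_succ_of_mul_mul_self_eq_neg (hA : A * A * A = -A) (n : ℕ) :
    A ^ (2 * n + 2) = (-1 : ℝ) ^ n • (A * A) := by
  rw [pow_succ, pow_odd_of_mul_mul_self_eq_neg hA, smul_mul_assoc]

/-- Rodrigues' formula: split the exponential series into its even terms, which after the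
constant term are the cosine series times `-A²`, and its odd terms, the sine series times `A`. -/
theorem exp_smul_of_mul_mul_self_eq_neg [CompleteSpace 𝔸] (hA : A * A * A = -A) (θ : ℝ) :
    NormedSpace.exp (θ • A) = 1 + Real.sin θ • A + (1 - Real.cos θ) • (A * A) := by
  have heven : HasSum (fun n => ((2 * n).factorial⁻¹ : ℝ) • (θ • A) ^ (2 * n))
      (1 + (1 - Real.cos θ) • (A * A)) := by
    have h := (hasSum_ite_eq 0 (1 + A * A)).add ((Real.hasSum_cos θ).smul_const (-(A * A)))
    convert h using 1
    · funext n
      rcases n with _ | n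
      · simp
      rw [smul_pow, Nat.mul_succ, pow_even_succ_of_mul_mul_self_eq_neg hA, smul_smul, smul_smul,
        pow_succ (-1 : ℝ), if_neg n.succ_ne_zero, zero_add, smul_neg, ← neg_smul]
      congr 1
      ring
    · rw [smul_neg, sub_smul, one_smul]
      abel
  have hodd : HasSum (fun n => ((2 * n + 1).factorial⁻¹ : ℝ) • (θ • A) ^ (2 * n + 1))
      (Real.sin θ • A) := by
    convert (Real.hasSum_sin θ).smul_const A using 1
    funext n
    rw [smul_pow, pow_odd_of_mul_mul_self_eq_neg hA, smul_smul, smul_smul]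
    congr 1
    ring
  rw [(NormedSpace.exp_series_hasSum_exp' (𝕂 := ℝ) (θ • A)).unique (heven.even_add_odd hodd)]
  abel

end Rodrigues

theorem SO3.mul_transpose {R : Mat3} (hR : R ∈ SO3) : R * Rᵀ = 1 :=
  mul_eq_one_comm.mp hR.1

theorem SO3.transpose_mem {R : Mat3} (hR : R ∈ SO3) : Rᵀ ∈ SO3 :=
  ⟨by rw [transpose_transpose, SO3.mul_transpose hR], by rw [det_transpose, hR.2]⟩

theorem transpose_mul_hat_mulVec_mul (M : Mat3) (v : Fin 3 → ℝ) :
    Mᵀ * hat (M *ᵥ v) * M = M.det • hat v := by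
  ext a b
  fin_cases a <;> fin_cases b <;>
    simp [hat, mul_apply, mulVec, dotProduct, Fin.sum_univ_three, det_fin_three] <;> ring

theorem hat_mulVec_of_mem_SO3 {R : Mat3} (hR : R ∈ SO3) (v : Fin 3 → ℝ) :
    hat (R *ᵥ v) = R * hat v * Rᵀ := by
  rw [← one_smul ℝ (hat v), ← hR.2, ← transpose_mul_hat_mulVec_mul, Matrix.mul_assoc,
    Matrix.mul_assoc, SO3.mul_transpose hR, Matrix.mul_one, ← Matrix.mul_assoc,
    SO3.mul_transpose hR, Matrix.one_mul]

theorem exp_conj_of_mem_SO3 {R : Mat3} (hR : R ∈ SO3) (A : Mat3) :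
    NormedSpace.exp (R * A * Rᵀ) = R * NormedSpace.exp A * Rᵀ :=
  exp_units_conj ⟨R, Rᵀ, SO3.mul_transpose hR, hR.1⟩ A

theorem exp_smul_hat_mulVec {R : Mat3} (hR : R ∈ SO3) (v : Fin 3 → ℝ) (θ : ℝ) :
    NormedSpace.exp (θ • hat (R *ᵥ v)) = R * NormedSpace.exp (θ • hat v) * Rᵀ := by
  rw [hat_mulVec_of_mem_SO3 hR, ← exp_conj_of_mem_SO3 hR, mul_smul_comm, smul_mul_assoc]

theorem exp_smul_hat_mulVec_mul {U V : Mat3} (hU : U ∈ SO3) (v : Fin 3 → ℝ) (θ : ℝ) :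
    NormedSpace.exp (θ • hat (U *ᵥ v)) * (U * Vᵀ) = U * NormedSpace.exp (θ • hat v) * Vᵀ := by
  rw [exp_smul_hat_mulVec hU]
  simp only [Matrix.mul_assoc]
  rw [← Matrix.mul_assoc Uᵀ U, hU.1, Matrix.one_mul]

theorem mul_transpose_mul_exp_smul_hat_mulVec {U V : Mat3} (hV : V ∈ SO3) (v : Fin 3 → ℝ)
    (θ : ℝ) :
    U * Vᵀ * NormedSpace.exp (θ • hat (V *ᵥ v)) = U * NormedSpace.exp (θ • hat v) * Vᵀ := by
  rw [exp_smul_hat_mulVec hV]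
  simp only [Matrix.mul_assoc]
  rw [← Matrix.mul_assoc Vᵀ V, hV.1, Matrix.one_mul]

theorem trace_transpose_mul_mul_mul {U V : Mat3} (hU : U ∈ SO3) (hV : V ∈ SO3) (A B : Mat3) :
    ((U * A * Vᵀ)ᵀ * (U * B * Vᵀ)).trace = (Aᵀ * B).trace := by
  simp only [transpose_mul, transpose_transpose, Matrix.mul_assoc]
  rw [← Matrix.mul_assoc Uᵀ U, hU.1, Matrix.one_mul, trace_mul_comm, Matrix.mul_assoc,
    Matrix.mul_assoc, hV.1, Matrix.mul_one]

theorem hat_mul_hat_mul_hat (v : Fin 3 → ℝ) :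
    hat v * hat v * hat v = -((v ⬝ᵥ v) • hat v) := by
  ext a b
  fin_cases a <;> fin_cases b <;>
    simp [hat, mul_apply, dotProduct, Fin.sum_univ_three] <;> ring

theorem exp_smul_hat_of_dotProduct_self_eq_one {v : Fin 3 → ℝ} (hv : v ⬝ᵥ v = 1) (θ : ℝ) :
    NormedSpace.exp (θ • hat v)
      = 1 + Real.sin θ • hat v + (1 - Real.cos θ) • (hat v * hat v) := by
  let : NormedRing Mat3 := Matrix.linftyOpNormedRing
  let : NormedAlgebra ℝ Mat3 := Matrix.linftyOpNormedAlgebra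
  exact exp_smul_of_mul_mul_self_eq_neg (by rw [hat_mul_hat_mul_hat, hv, one_smul]) θ

theorem trace_diagonal_mul_hat (s v : Fin 3 → ℝ) : (diagonal s * hat v).trace = 0 := by
  simp [trace, hat, Fin.sum_univ_three]

theorem trace_diagonal_mul_hat_mul_hat (s v : Fin 3 → ℝ) :
    (diagonal s * (hat v * hat v)).trace = ∑ a, s a * v a ^ 2 - (v ⬝ᵥ v) * ∑ a, s a := by
  simp [trace, hat, mul_apply, dotProduct, Fin.sum_univ_three]
  ring

theorem trace_diagonal_mul_exp_smul_hat_single (s : Fin 3 → ℝ) (i : Fin 3) (θ : ℝ) :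
    (diagonal s * NormedSpace.exp (θ • hat (Pi.single i 1))).trace
      = s i + (∑ a, s a - s i) * Real.cos θ := by
  have hsingle : Pi.single i (1 : ℝ) ⬝ᵥ Pi.single i 1 = 1 := by simp
  rw [exp_smul_hat_of_dotProduct_self_eq_one hsingle, mul_add, mul_add, trace_add, trace_add,
    mul_smul_comm, mul_smul_comm, trace_smul, trace_smul, trace_diagonal_mul_hat,
    trace_diagonal_mul_hat_mul_hat, hsingle, mul_one, trace_diagonal]
  simp [Pi.single_apply]
  ring

theorem sum_fin_three_sub {s : Fin 3 → ℝ} {i j k : Fin 3} (hij : i ≠ j) (hjk : j ≠ k)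
    (hik : i ≠ k) : ∑ a, s a - s i = s j + s k := by
  rw [Fin.sum_univ_three]
  fin_cases i <;> fin_cases j <;> fin_cases k <;> simp_all <;> ring

instance : BorelSpace Mat3 := Pi.borelSpace

theorem IsHaarSO3.map_mul_mul {ν : Measure Mat3} (hν : IsHaarSO3 ν) {A B : Mat3}
    (hA : A ∈ SO3) (hB : B ∈ SO3) : ν.map (fun Q => A * Q * B) = ν := by
  have hmul : (fun Q : Mat3 => A * Q * B) = (fun Q => Q * B) ∘ (fun Q => A * Q) := rfl
  rw [hmul, ← Measure.map_map (by fun_prop) (by fun_prop), hν.2.2.1 A hA, hν.2.2.2 B hB]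

theorem IsHaarSO3.cF_mul_mul {ν : Measure Mat3} (hν : IsHaarSO3 ν) {A B : Mat3}
    (hA : A ∈ SO3) (hB : B ∈ SO3) (F : Mat3) : cF ν (A * F * B) = cF ν F := by
  have htrace (Q : Mat3) : ((A * F * B)ᵀ * Q).trace = (Fᵀ * (Aᵀ * Q * Bᵀ)).trace := by
    simp only [transpose_mul, Matrix.mul_assoc]
    rw [trace_mul_comm Bᵀ]
    simp only [Matrix.mul_assoc]
  have hcont : Continuous fun Q : Mat3 => Real.exp ((Fᵀ * Q).trace) := by fun_prop
  simp only [cF, htrace]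
  rw [← integral_map (by fun_prop : Measurable fun Q : Mat3 => Aᵀ * Q * Bᵀ).aemeasurable
    hcont.aestronglyMeasurable, hν.map_mul_mul (SO3.transpose_mem hA) (SO3.transpose_mem hB)]

/-- With `F = USVᵀ`, `M = UVᵀ` and `R(θ) = exp(θ(Ue_i)∧)M`, one has
`exp(θ(Ue_i)∧)M = M exp(θ(Ve_i)∧)`, `tr(FᵀR(θ)) = s_i + (s_j + s_k)cos θ`, and
`p(R(θ); F) = (e^{s_i}/c(S))·exp((s_j + s_k)cos θ)`. -/
theorem stmt17 (ν : Measure Mat3) (hν : IsHaarSO3 ν)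
    (U V : Mat3) (hU : U ∈ SO3) (hV : V ∈ SO3)
    (s : Fin 3 → ℝ) (S : Mat3) (hS : S = Matrix.diagonal s)
    (F M : Mat3) (hF : F = U * S * Vᵀ) (hM : M = U * Vᵀ)
    (i j k : Fin 3) (hij : i ≠ j) (hjk : j ≠ k) (hik : i ≠ k) (θ : ℝ) :
    NormedSpace.exp (θ • hat (U *ᵥ Pi.single i 1)) * M
      = M * NormedSpace.exp (θ • hat (V *ᵥ Pi.single i 1)) ∧
    (Fᵀ * (NormedSpace.exp (θ • hat (U *ᵥ Pi.single i 1)) * M)).trace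
      = s i + (s j + s k) * Real.cos θ ∧
    Real.exp ((Fᵀ * (NormedSpace.exp (θ • hat (U *ᵥ Pi.single i 1)) * M)).trace)
        / cF ν F
      = (Real.exp (s i) / cF ν S) * Real.exp ((s j + s k) * Real.cos θ) := by
  have hR : NormedSpace.exp (θ • hat (U *ᵥ Pi.single i 1)) * M
      = U * NormedSpace.exp (θ • hat (Pi.single i 1)) * Vᵀ := by
    rw [hM, exp_smul_hat_mulVec_mul hU]
  have htrace : (Fᵀ * (NormedSpace.exp (θ • hat (U *ᵥ Pi.single i 1)) * M)).trace
      = s i + (s j + s k) * Real.cos θ := by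
    rw [hR, hF, trace_transpose_mul_mul_mul hU hV, hS, diagonal_transpose,
      trace_diagonal_mul_exp_smul_hat_single, sum_fin_three_sub hij hjk hik]
  refine ⟨?_, htrace, ?_⟩
  · rw [hR, hM, mul_transpose_mul_exp_smul_hat_mulVec hV]
  · rw [htrace, hF, hν.cF_mul_mul hU (SO3.transpose_mem hV), Real.exp_add]
    ring
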